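/- The entropic uncertainty relation for a full set of mutually unbiased bases: if B_1, …, B_{d+1} are d+1 pairwise mutually unbiased orthonormal bases of ℂ^d, then for every density matrix ρ on ℂ^d, (1/(d+1)) Σ_{i=1}^{d+1} H(B_i | ρ) ≥ log₂(d+1) - 1, where H(B_i | ρ) is the Shannon entropy of the outcome distribution (⟨b|ρ|b⟩)_{b ∈ B_i}. -/

import Mathlib

/-!
Write `p i x = ⟪B i x, ρ (B i x)⟫`. Send operators into Hilbert–Schmidt space. The rank-one
projectors onto the basis vectors, weighted by the centred probabilities `p i x - 1/d`, add up to
a vector `w` such that `‖w‖²` and `⟪w, ρ - 1/d⟫` both equal `∑ (p i x - 1/d)²`. Unbiasedness is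
what makes `‖w‖²` collapse to this sum. By Cauchy–Schwarz the sum is at most
`‖ρ - 1/d‖²_HS = tr ρ² - 1/d ≤ 1 - 1/d`, so that `∑ i, ∑ x, p i x ^ 2 ≤ 2` for `d + 1` bases.
By Gibbs' inequality Shannon entropy dominates the collision entropy `-log ∑ x, p x ^ 2`.
Concavity of `log` then bounds the average of the collision entropies below by
`-log₂` of the average collision probability, which is at most `2/(d+1)`.
-/

open Finset InnerProductSpace RCLike

section HilbertSchmidt

variable {𝕜 E ι : Type*} [RCLike 𝕜] [NormedAddCommGroup E] [InnerProductSpace 𝕜 E] [Fintype ι]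

theorem norm_le_norm_of_inner_eq_inner_self {v w : E} (h : ⟪w, v⟫_𝕜 = ⟪w, w⟫_𝕜) :
    ‖w‖ ≤ ‖v‖ := by
  rcases (norm_nonneg w).eq_or_lt with hw | hw
  · rw [← hw]; exact norm_nonneg v
  have : ‖w‖ * ‖w‖ ≤ ‖w‖ * ‖v‖ := by
    calc ‖w‖ * ‖w‖ = re ⟪w, v⟫_𝕜 := by rw [h, inner_self_eq_norm_mul_norm]
      _ ≤ ‖w‖ * ‖v‖ := re_inner_le_norm w v
  exact le_of_mul_le_mul_left this hw

/-- An isometric embedding of operators, with the Hilbert–Schmidt inner product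
`⟪A, B⟫ = tr (A† B)`, into `ℓ²(ι; E)`. -/
noncomputable def hilbertSchmidtVec (e : OrthonormalBasis ι 𝕜 E) (A : E →ₗ[𝕜] E) :
    PiLp 2 (fun _ : ι => E) :=
  WithLp.toLp 2 fun l => A (e l)

theorem inner_hilbertSchmidtVec_rankOne_left (e : OrthonormalBasis ι 𝕜 E) (b : E)
    (A : E →ₗ[𝕜] E) :
    ⟪hilbertSchmidtVec e (rankOne 𝕜 b b), hilbertSchmidtVec e A⟫_𝕜 = ⟪b, A b⟫_𝕜 := by
  calc _ = ∑ l, ⟪e l, b⟫_𝕜 * ⟪b, A (e l)⟫_𝕜 := by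
        simp [hilbertSchmidtVec, PiLp.inner_apply, inner_smul_left]
    _ = ⟪b, A (∑ l, ⟪e l, b⟫_𝕜 • e l)⟫_𝕜 := by simp [inner_sum, inner_smul_right]
    _ = ⟪b, A b⟫_𝕜 := by rw [e.sum_repr']

theorem inner_hilbertSchmidtVec_rankOne_rankOne (e : OrthonormalBasis ι 𝕜 E) (b c : E) :
    ⟪hilbertSchmidtVec e (rankOne 𝕜 b b), hilbertSchmidtVec e (rankOne 𝕜 c c)⟫_𝕜 =
      ((‖⟪b, c⟫_𝕜‖ ^ 2 : ℝ) : 𝕜) := by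
  rw [inner_hilbertSchmidtVec_rankOne_left, ContinuousLinearMap.coe_coe, rankOne_apply,
    inner_smul_right, ← inner_conj_symm, RCLike.conj_mul]
  push_cast
  rfl

theorem norm_sq_hilbertSchmidtVec_of_apply_eq_smul (e : OrthonormalBasis ι 𝕜 E) {A : E →ₗ[𝕜] E}
    {μ : ι → ℝ} (he : ∀ l, A (e l) = (μ l : 𝕜) • e l) :
    ‖hilbertSchmidtVec e A‖ ^ 2 = ∑ l, μ l ^ 2 := by
  simp [hilbertSchmidtVec, PiLp.norm_sq_eq_of_L2, he, norm_smul]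

end HilbertSchmidt

theorem sum_sub_inv_card_sq {ι : Type*} [Fintype ι] {f : ι → ℝ} (hf : ∑ x, f x = 1) :
    ∑ x, (f x - (Fintype.card ι : ℝ)⁻¹) ^ 2 = ∑ x, f x ^ 2 - (Fintype.card ι : ℝ)⁻¹ := by
  simp only [sub_sq, sum_add_distrib, sum_sub_distrib, ← sum_mul, ← mul_sum, hf, sum_const,
    card_univ, nsmul_eq_mul]
  rcases eq_or_ne (Fintype.card ι : ℝ) 0 with h | h
  · simp [h]
  · field_simp
    ring

theorem LinearMap.re_trace_eq_sum_re_inner {𝕜 E ι : Type*} [RCLike 𝕜] [NormedAddCommGroup E]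
    [InnerProductSpace 𝕜 E] [Fintype ι] (T : E →ₗ[𝕜] E) (b : OrthonormalBasis ι 𝕜 E) :
    re (LinearMap.trace 𝕜 E T) = ∑ i, re ⟪b i, T (b i)⟫_𝕜 := by
  rw [LinearMap.trace_eq_sum_inner T b, map_sum]

section Unbiased

variable {𝕜 E κ ι : Type*} [RCLike 𝕜] [NormedAddCommGroup E] [InnerProductSpace 𝕜 E]
  [Fintype κ] [Fintype ι]

theorem sum_mul_norm_inner_sq_eq_sum_sq_of_unbiased (B : κ → OrthonormalBasis ι 𝕜 E) {c : ℝ}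
    (hB : ∀ i j, i ≠ j → ∀ x y, ‖⟪B i x, B j y⟫_𝕜‖ ^ 2 = c) (q : κ → ι → ℝ)
    (hq : ∀ i, ∑ x, q i x = 0) :
    ∑ i, ∑ x, ∑ j, ∑ y, q i x * q j y * ‖⟪B i x, B j y⟫_𝕜‖ ^ 2 = ∑ i, ∑ x, q i x ^ 2 := by
  classical
  refine sum_congr rfl fun i _ => ?_
  rw [sum_comm, sum_eq_single i]
  · have horth := orthonormal_iff_ite.mp (B i).orthonormal
    simp [horth, apply_ite, sq]
  · intro j _ hj
    simp_rw [hB i j hj.symm, ← sum_mul, ← mul_sum, hq]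
    simp
  · simp

theorem sum_sq_re_inner_le_of_unbiased (B : κ → OrthonormalBasis ι 𝕜 E) {c : ℝ}
    (hB : ∀ i j, i ≠ j → ∀ x y, ‖⟪B i x, B j y⟫_𝕜‖ ^ 2 = c)
    {σ : E →ₗ[𝕜] E} (hσ : σ.IsSymmetric) (htr : LinearMap.trace 𝕜 E σ = 0)
    {ι' : Type*} [Fintype ι'] (e : OrthonormalBasis ι' 𝕜 E) {μ : ι' → ℝ}
    (he : ∀ l, σ (e l) = (μ l : 𝕜) • e l) :
    ∑ i, ∑ x, (re ⟪B i x, σ (B i x)⟫_𝕜) ^ 2 ≤ ∑ l, μ l ^ 2 := by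
  set q : κ → ι → ℝ := fun i x => re ⟪B i x, σ (B i x)⟫_𝕜
  have hq : ∀ i, ∑ x, q i x = 0 := fun i => by
    simpa [htr] using (σ.re_trace_eq_sum_re_inner (B i)).symm
  set P : κ → ι → PiLp 2 (fun _ : ι' => E) := fun i x =>
    hilbertSchmidtVec e (rankOne 𝕜 (B i x) (B i x))
  set w := ∑ i, ∑ x, (q i x : 𝕜) • P i x
  have hqσ : ∀ i x, ⟪B i x, σ (B i x)⟫_𝕜 = (q i x : 𝕜) := fun i x =>
    (hσ.coe_re_inner_self_apply _).symm
  have hwσ : ⟪w, hilbertSchmidtVec e σ⟫_𝕜 = ((∑ i, ∑ x, q i x ^ 2 : ℝ) : 𝕜) := by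
    simp only [w, P, sum_inner, inner_smul_left, inner_hilbertSchmidtVec_rankOne_left, hqσ,
      conj_ofReal]
    push_cast
    simp only [sq]
  have hww : ⟪w, w⟫_𝕜 = ((∑ i, ∑ x, q i x ^ 2 : ℝ) : 𝕜) := by
    rw [← sum_mul_norm_inner_sq_eq_sum_sq_of_unbiased B hB q hq]
    simp only [w, P, sum_inner, inner_sum, inner_smul_left, inner_smul_right,
      inner_hilbertSchmidtVec_rankOne_rankOne, conj_ofReal, mul_sum]
    push_cast
    simp only [mul_assoc, norm_inner_symm]
  have hnorm : ‖w‖ ≤ ‖hilbertSchmidtVec e σ‖ :=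
    norm_le_norm_of_inner_eq_inner_self (hwσ.trans hww.symm)
  have hw2 : ‖w‖ ^ 2 = ∑ i, ∑ x, q i x ^ 2 := by
    exact_mod_cast (inner_self_eq_norm_sq_to_K (𝕜 := 𝕜) w).symm.trans hww
  rw [← norm_sq_hilbertSchmidtVec_of_apply_eq_smul e he, ← hw2]
  gcongr

theorem sum_sum_sq_re_inner_le_of_unbiased [FiniteDimensional 𝕜 E]
    (B : κ → OrthonormalBasis ι 𝕜 E)
    {c : ℝ} (hB : ∀ i j, i ≠ j → ∀ x y, ‖⟪B i x, B j y⟫_𝕜‖ ^ 2 = c)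
    {ρ : E →ₗ[𝕜] E} (hρ : ρ.IsPositive) (htr : LinearMap.trace 𝕜 E ρ = 1) :
    ∑ i, ∑ x, (re ⟪B i x, ρ (B i x)⟫_𝕜) ^ 2 ≤ 1 + (Fintype.card κ - 1) / Module.finrank 𝕜 E := by
  obtain ⟨d, hd⟩ : ∃ d, Module.finrank 𝕜 E = d := ⟨_, rfl⟩
  have hsym := hρ.isSymmetric
  set μ := hsym.eigenvalues hd
  have hμ0 : ∀ l, 0 ≤ μ l := hρ.nonneg_eigenvalues hd
  have hμ1 : ∑ l, μ l = 1 := by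
    simpa [htr] using (hsym.re_trace_eq_sum_eigenvalues hd).symm
  have hd0 : d ≠ 0 := by
    rintro rfl
    simp at hμ1
  have hcard : ∀ i : κ, (Fintype.card ι : ℝ) = d := fun i => by
    rw [← Module.finrank_eq_card_basis (B i).toBasis, hd]
  set σ : E →ₗ[𝕜] E := ρ - (((d : ℝ)⁻¹ : ℝ) : 𝕜) • 1
  have hσ : σ.IsSymmetric := hsym.sub (LinearMap.IsSymmetric.one.smul (conj_ofReal _))
  have htrσ : LinearMap.trace 𝕜 E σ = 0 := by
    simp [σ, htr, hd, hd0]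
  have heσ : ∀ l, σ (hsym.eigenvectorBasis hd l) =
      ((μ l - (d : ℝ)⁻¹ : ℝ) : 𝕜) • hsym.eigenvectorBasis hd l := fun l => by
    simp [σ, hsym.apply_eigenvectorBasis, sub_smul, μ]
  have hcentred := sum_sq_re_inner_le_of_unbiased B hB hσ htrσ _ heσ
  have hp : ∀ i x, re ⟪B i x, σ (B i x)⟫_𝕜 = re ⟪B i x, ρ (B i x)⟫_𝕜 - (d : ℝ)⁻¹ := by
    intro i x
    simp only [σ, LinearMap.sub_apply, LinearMap.smul_apply, Module.End.one_apply,
      inner_sub_right, inner_smul_right, inner_self_eq_norm_sq_to_K,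
      OrthonormalBasis.norm_eq_one, map_sub, re_ofReal_mul]
    simp
  have hp1 : ∀ i, ∑ x, re ⟪B i x, ρ (B i x)⟫_𝕜 = 1 := fun i => by
    simpa [htr] using (ρ.re_trace_eq_sum_re_inner (B i)).symm
  have hbases : ∀ i, ∑ x, (re ⟪B i x, σ (B i x)⟫_𝕜) ^ 2 =
      ∑ x, (re ⟪B i x, ρ (B i x)⟫_𝕜) ^ 2 - (d : ℝ)⁻¹ := fun i => by
    simp only [hp, ← hcard i]
    exact sum_sub_inv_card_sq (hp1 i)
  have hμ2 : ∑ l, (μ l - (d : ℝ)⁻¹) ^ 2 ≤ 1 - (d : ℝ)⁻¹ := by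
    have hpurity : ∑ l, μ l ^ 2 ≤ 1 := by
      calc ∑ l, μ l ^ 2 ≤ (∑ l, μ l) ^ 2 := sum_sq_le_sq_sum_of_nonneg fun l _ => hμ0 l
        _ = 1 := by rw [hμ1, one_pow]
    have hcentered := sum_sub_inv_card_sq hμ1
    rw [Fintype.card_fin] at hcentered
    linarith
  simp only [hbases, sum_sub_distrib, sum_const, card_univ, nsmul_eq_mul] at hcentred
  rw [hd, sub_div, div_eq_mul_inv, one_div]
  linarith

end Unbiased

section Entropy

open Real

variable {ι : Type*} [Fintype ι]

theorem sum_sq_pos_of_sum_eq_one {p : ι → ℝ} (h1 : ∑ x, p x = 1) : 0 < ∑ x, p x ^ 2 := by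
  obtain ⟨x, -, hx⟩ := exists_ne_zero_of_sum_ne_zero (h1.trans_ne one_ne_zero)
  exact sum_pos' (fun y _ => sq_nonneg (p y)) ⟨x, mem_univ x, by positivity⟩

theorem sum_mul_log_le_log_sum_sq {p : ι → ℝ} (h0 : ∀ x, 0 ≤ p x) (h1 : ∑ x, p x = 1) :
    ∑ x, p x * log (p x) ≤ log (∑ x, p x ^ 2) := by
  set S := ∑ x, p x ^ 2
  have hS : 0 < S := sum_sq_pos_of_sum_eq_one h1
  have hterm : ∀ x, p x * log (p x) - p x * log S ≤ p x ^ 2 / S - p x := fun x => by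
    rcases (h0 x).eq_or_lt with hx | hx
    · simp [← hx]
    have := log_le_sub_one_of_pos (div_pos hx hS)
    rw [log_div hx.ne' hS.ne'] at this
    calc p x * log (p x) - p x * log S = p x * (log (p x) - log S) := by ring
      _ ≤ p x * (p x / S - 1) := mul_le_mul_of_nonneg_left this hx.le
      _ = p x ^ 2 / S - p x := by ring
  have hsum := sum_le_sum fun x (_ : x ∈ univ) => hterm x
  rw [sum_sub_distrib, sum_sub_distrib, ← sum_mul, ← sum_div, h1, div_self hS.ne'] at hsum
  linarith

theorem neg_logb_mean_sum_sq_le_mean_entropy {κ : Type*} [Fintype κ] [Nonempty κ] {b : ℝ}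
    (hb : 1 < b) {p : κ → ι → ℝ} (h0 : ∀ i x, 0 ≤ p i x) (h1 : ∀ i, ∑ x, p i x = 1) :
    -logb b ((Fintype.card κ : ℝ)⁻¹ * ∑ i, ∑ x, p i x ^ 2) ≤
      (Fintype.card κ : ℝ)⁻¹ * ∑ i, -∑ x, p i x * logb b (p i x) := by
  set w : ℝ := (Fintype.card κ : ℝ)⁻¹
  have hw : 0 ≤ w := by positivity
  have hjensen : ∑ i, w * log (∑ x, p i x ^ 2) ≤ log (∑ i, w * ∑ x, p i x ^ 2) := by
    simpa using strictConcaveOn_log_Ioi.concaveOn.le_map_sum (t := univ)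
      (fun _ _ => hw) (by simp [w]) fun i _ => sum_sq_pos_of_sum_eq_one (h1 i)
  have hlog : -log (w * ∑ i, ∑ x, p i x ^ 2) ≤ w * ∑ i, -∑ x, p i x * log (p i x) := by
    calc -log (w * ∑ i, ∑ x, p i x ^ 2) ≤ -∑ i, w * log (∑ x, p i x ^ 2) := by
          rw [mul_sum]; exact neg_le_neg hjensen
      _ ≤ w * ∑ i, -∑ x, p i x * log (p i x) := by
          rw [mul_sum, ← sum_neg_distrib]
          gcongr with i
          rw [← mul_neg]
          exact mul_le_mul_of_nonneg_left
            (neg_le_neg (sum_mul_log_le_log_sum_sq (h0 i) (h1 i))) hw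
  simp only [logb, mul_div_assoc', ← sum_div, ← neg_div]
  exact div_le_div_of_nonneg_right hlog (log_pos hb).le

end Entropy

/-- Entropic uncertainty relation for a full set of `d+1` mutually unbiased bases of `ℂ^d`:
the average Shannon entropy (base 2) of the measurement outcome distributions is at least
`log₂(d+1) - 1` for every density operator `ρ`. -/
theorem stmt_10 (d : ℕ) (hd : 1 ≤ d)
    (B : Fin (d + 1) → OrthonormalBasis (Fin d) ℂ (EuclideanSpace ℂ (Fin d)))
    (hMUB : ∀ i j, i ≠ j → ∀ x y, ‖⟪B i x, B j y⟫_ℂ‖ ^ 2 = 1 / d)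
    (ρ : EuclideanSpace ℂ (Fin d) →ₗ[ℂ] EuclideanSpace ℂ (Fin d))
    (hsym : LinearMap.IsSymmetric ρ)
    (hpos : ∀ v, 0 ≤ (⟪v, ρ v⟫_ℂ).re)
    (htr : LinearMap.trace ℂ _ ρ = 1) :
    (1 / ((d : ℝ) + 1)) *
        ∑ i : Fin (d + 1),
          (- ∑ x : Fin d, (⟪B i x, ρ (B i x)⟫_ℂ).re * Real.logb 2 (⟪B i x, ρ (B i x)⟫_ℂ).re)
      ≥ Real.logb 2 ((d : ℝ) + 1) - 1 := by
  set p : Fin (d + 1) → Fin d → ℝ := fun i x => (⟪B i x, ρ (B i x)⟫_ℂ).re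
  have hρ : ρ.IsPositive := ⟨hsym, fun v => (inner_re_symm (𝕜 := ℂ) _ _).trans_ge (hpos v)⟩
  have hp1 : ∀ i, ∑ x, p i x = 1 := fun i => by
    simpa [htr] using (ρ.re_trace_eq_sum_re_inner (B i)).symm
  have hcoll : ∑ i, ∑ x, p i x ^ 2 ≤ 2 := by
    have h := sum_sum_sq_re_inner_le_of_unbiased B hMUB hρ htr
    rwa [Fintype.card_fin, finrank_euclideanSpace_fin, Nat.cast_add, Nat.cast_one,
      add_sub_cancel_right, div_self (by positivity), one_add_one_eq_two] at h
  have hmean := neg_logb_mean_sum_sq_le_mean_entropy one_lt_two (fun i x => hpos (B i x)) hp1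
  rw [Fintype.card_fin, Nat.cast_add, Nat.cast_one, ← one_div] at hmean
  have hS : 0 < ∑ i, ∑ x, p i x ^ 2 :=
    sum_pos (fun i _ => sum_sq_pos_of_sum_eq_one (hp1 i)) univ_nonempty
  calc Real.logb 2 ((d : ℝ) + 1) - 1 = -Real.logb 2 (2 / ((d : ℝ) + 1)) := by
        rw [Real.logb_div two_ne_zero (by positivity), Real.logb_self_eq_one one_lt_two]
        ring
    _ ≤ -Real.logb 2 (1 / ((d : ℝ) + 1) * ∑ i, ∑ x, p i x ^ 2) := by
        gcongr
        · exact one_lt_two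
        · rw [one_div_mul_eq_div]
          gcongr
    _ ≤ _ := hmean
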